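/- Let Ω ⊂ ℂⁿ be a domain containing the origin and let A_i = Σ_{j=1}^n a_{ij}(z) ∂/∂z_j (i = 1,…,n) be holomorphic vector fields on Ω whose coefficient functions satisfy a_{ij}(0) = δ_{ij} (Kronecker delta). If f ∈ O(Ω) satisfies A_i f ∈ O(Ω)·f for every i (i.e., for each i there is g_i ∈ O(Ω) with Σ_j a_{ij}·∂f/∂z_j = g_i·f on Ω) and f(0) = 0, then f = 0 identically on Ω. -/

import Mathlib

/-!
Since `a_{ij}(0) = δ_{ij}`, near the origin the fields `A_i` form a frame close to the coordinate
frame, so the relations `A_i f = g_i f` control the whole differential: `‖Df‖ ≤ K |f|` on a small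
ball around `0`. Along each segment from the origin, `f` then satisfies a linear differential
inequality with zero initial value, and Grönwall's inequality makes it vanish on that ball. The
identity theorem, applied on complex lines, spreads the vanishing over the connected domain `Ω`.
-/

open Metric Filter Set Topology

section Frame

variable {𝕜 F ι : Type*} [NontriviallyNormedField 𝕜] [NormedAddCommGroup F] [NormedSpace 𝕜 F]
  [Fintype ι] [DecidableEq ι]

theorem ContinuousLinearMap.apply_eq_sum_smul_apply_single (L : (ι → 𝕜) →L[𝕜] F)
    (v : ι → 𝕜) : L v = ∑ i, v i • L (Pi.single i 1) := by
  conv_lhs => rw [← Finset.univ_sum_single v]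
  rw [map_sum]
  refine Finset.sum_congr rfl fun i _ => ?_
  rw [← L.map_smul, ← Pi.single_smul, smul_eq_mul, mul_one]

theorem ContinuousLinearMap.opNorm_le_sum_norm_apply_single (L : (ι → 𝕜) →L[𝕜] F) :
    ‖L‖ ≤ ∑ i, ‖L (Pi.single i 1)‖ := by
  refine L.opNorm_le_bound (by positivity) fun v => ?_
  calc ‖L v‖ = ‖∑ i, v i • L (Pi.single i 1)‖ := by rw [L.apply_eq_sum_smul_apply_single v]
    _ ≤ ∑ i, ‖v‖ * ‖L (Pi.single i 1)‖ := by
        refine norm_sum_le_of_le _ fun i _ => ?_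
        rw [norm_smul]
        gcongr
        exact norm_le_pi_norm v i
    _ = (∑ i, ‖L (Pi.single i 1)‖) * ‖v‖ := by
        rw [Finset.sum_mul]; exact Finset.sum_congr rfl fun i _ => mul_comm _ _

theorem ContinuousLinearMap.opNorm_le_two_mul_sum_norm_apply_of_near_single
    (L : (ι → 𝕜) →L[𝕜] F) (r : ι → ι → 𝕜)
    (hr : ∀ i, ‖r i - Pi.single i 1‖ ≤ (2 * Fintype.card ι : ℝ)⁻¹) :
    ‖L‖ ≤ 2 * ∑ i, ‖L (r i)‖ := by
  set η : ℝ := (2 * Fintype.card ι : ℝ)⁻¹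
  have hsingle : ∀ i, ‖L (Pi.single i 1)‖ ≤ ‖L (r i)‖ + ‖L‖ * η := fun i =>
    calc ‖L (Pi.single i 1)‖ = ‖L (r i) - L (r i - Pi.single i 1)‖ := by simp
      _ ≤ ‖L (r i)‖ + ‖L‖ * ‖r i - Pi.single i 1‖ :=
        (norm_sub_le _ _).trans (add_le_add_right (L.le_opNorm _) _)
      _ ≤ ‖L (r i)‖ + ‖L‖ * η := by gcongr; exact hr i
  have hcard : Fintype.card ι * η ≤ 1 / 2 := by
    rcases (Fintype.card ι).eq_zero_or_pos with h | h
    · simp [h]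
    · simp only [η]; field_simp; norm_num
  have hL : ‖L‖ ≤ ∑ i, ‖L (r i)‖ + ‖L‖ * (Fintype.card ι * η) :=
    calc ‖L‖ ≤ ∑ i, (‖L (r i)‖ + ‖L‖ * η) :=
          L.opNorm_le_sum_norm_apply_single.trans (Finset.sum_le_sum fun i _ => hsingle i)
      _ = ∑ i, ‖L (r i)‖ + ‖L‖ * (Fintype.card ι * η) := by
          rw [Finset.sum_add_distrib, Finset.sum_const, Finset.card_univ, nsmul_eq_mul]; ring
  nlinarith [mul_le_mul_of_nonneg_left hcard (norm_nonneg L)]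

theorem exists_eventually_norm_fderiv_le_mul_norm {f : (ι → 𝕜) → F} {x₀ : ι → 𝕜}
    {r : ι → (ι → 𝕜) → ι → 𝕜} {g : ι → (ι → 𝕜) → 𝕜} (hr : ∀ i, ContinuousAt (r i) x₀)
    (hr₀ : ∀ i, r i x₀ = Pi.single i 1) (hg : ∀ i, ContinuousAt (g i) x₀)
    (hfg : ∀ i, ∀ᶠ z in 𝓝 x₀, fderiv 𝕜 f z (r i z) = g i z • f z) :
    ∃ K, ∀ᶠ z in 𝓝 x₀, ‖fderiv 𝕜 f z‖ ≤ K * ‖f z‖ := by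
  have hnear : ∀ i, ∀ᶠ z in 𝓝 x₀, ‖r i z - Pi.single i 1‖ ≤ (2 * Fintype.card ι : ℝ)⁻¹ := by
    intro i
    have hlim : Tendsto (r i) (𝓝 x₀) (𝓝 (Pi.single i 1)) := hr₀ i ▸ (hr i).tendsto
    simpa [dist_eq_norm] using
      hlim.eventually (closedBall_mem_nhds _ (by simp [Fintype.card_pos_iff.2 ⟨i⟩]))
  have hbdd : ∀ i, ∀ᶠ z in 𝓝 x₀, ‖g i z‖ ≤ ‖g i x₀‖ + 1 := fun i =>
    (hg i).norm.eventually_le_const (lt_add_one _)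
  refine ⟨2 * ∑ i, (‖g i x₀‖ + 1), ?_⟩
  filter_upwards [eventually_all.2 hfg, eventually_all.2 hnear, eventually_all.2 hbdd]
    with z hzf hzr hzg
  calc ‖fderiv 𝕜 f z‖ ≤ 2 * ∑ i, ‖fderiv 𝕜 f z (r i z)‖ :=
        (fderiv 𝕜 f z).opNorm_le_two_mul_sum_norm_apply_of_near_single _ hzr
    _ ≤ 2 * ∑ i, (‖g i x₀‖ + 1) * ‖f z‖ := by
        gcongr with i
        rw [hzf i, norm_smul]
        gcongr
        exact hzg i
    _ = (2 * ∑ i, (‖g i x₀‖ + 1)) * ‖f z‖ := by rw [mul_assoc, Finset.sum_mul]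

end Frame

section RadialGronwall

variable {𝕜 E F : Type*} [NontriviallyNormedField 𝕜] [NormedAlgebra ℝ 𝕜]
  [NormedAddCommGroup E] [NormedSpace ℝ E] [NormedSpace 𝕜 E] [IsScalarTower ℝ 𝕜 E]
  [NormedAddCommGroup F] [NormedSpace ℝ F] [NormedSpace 𝕜 F] [IsScalarTower ℝ 𝕜 F]

theorem DifferentiableOn.eqOn_zero_of_starConvex_of_norm_fderiv_le {f : E → F} {s : Set E}
    {x : E} {K : ℝ} (hf : DifferentiableOn 𝕜 f s) (hs : StarConvex ℝ x s) (hso : IsOpen s)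
    (hK : ∀ z ∈ s, ‖fderiv 𝕜 f z‖ ≤ K * ‖f z‖) (hfx : f x = 0) : EqOn f 0 s := by
  intro z hz
  set φ : ℝ → F := fun t => f (x + t • (z - x))
  have hmem : ∀ t ∈ Icc (0 : ℝ) 1, x + t • (z - x) ∈ s := fun t ht =>
    hs.add_smul_sub_mem hz ht.1 ht.2
  have hφ : ∀ t ∈ Icc (0 : ℝ) 1, HasDerivAt φ (fderiv 𝕜 f (x + t • (z - x)) (z - x)) t := by
    intro t ht
    have hfd := (hf.differentiableAt (hso.mem_nhds (hmem t ht))).hasFDerivAt.restrictScalars ℝ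
    have hline : HasDerivAt (fun t : ℝ => x + t • (z - x)) (z - x) t := by
      simpa using ((hasDerivAt_id t).smul_const (z - x)).const_add x
    exact hfd.comp_hasDerivAt t hline
  have hbound : ∀ t ∈ Ico (0 : ℝ) 1,
      ‖fderiv 𝕜 f (x + t • (z - x)) (z - x)‖ ≤ K * ‖z - x‖ * ‖φ t‖ := fun t ht =>
    calc _ ≤ ‖fderiv 𝕜 f (x + t • (z - x))‖ * ‖z - x‖ := ContinuousLinearMap.le_opNorm _ _
      _ ≤ K * ‖φ t‖ * ‖z - x‖ := by gcongr; exact hK _ (hmem t (Ico_subset_Icc_self ht))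
      _ = K * ‖z - x‖ * ‖φ t‖ := by ring
  simpa [φ] using eq_zero_of_abs_deriv_le_mul_abs_self_of_eq_zero_right
    (fun t ht => (hφ t ht).continuousAt.continuousWithinAt)
    (fun t ht => (hφ t (Ico_subset_Icc_self ht)).hasDerivWithinAt) (by simpa [φ] using hfx)
    hbound 1 (right_mem_Icc.2 zero_le_one)

end RadialGronwall

section IdentityTheorem

variable {E F : Type*} [NormedAddCommGroup E] [NormedSpace ℂ E]
  [NormedAddCommGroup F] [NormedSpace ℂ F] [CompleteSpace F]

theorem DifferentiableOn.eqOn_zero_of_convex_of_eventuallyEq_zero {f : E → F} {s : Set E}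
    {w : E} (hf : DifferentiableOn ℂ f s) (hs : Convex ℝ s) (hso : IsOpen s) (hw : w ∈ s)
    (hfw : f =ᶠ[𝓝 w] 0) : EqOn f 0 s := by
  intro u hu
  set ℓ : ℂ → E := fun t => w + t • (u - w)
  have hℓ : Continuous ℓ := by fun_prop
  have hS : Convex ℝ (ℓ ⁻¹' s) := by
    intro t₁ ht₁ t₂ ht₂ a b ha hb hab
    show ℓ (a • t₁ + b • t₂) ∈ s
    convert hs ht₁ ht₂ ha hb hab using 1
    simp only [ℓ]
    rw [add_smul, smul_add, smul_add, smul_assoc, smul_assoc, add_add_add_comm, ← add_smul, hab,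
      one_smul]
  have hfℓ : AnalyticOnNhd ℂ (f ∘ ℓ) (ℓ ⁻¹' s) :=
    (hf.comp (by fun_prop : Differentiable ℂ ℓ).differentiableOn
      (mapsTo_preimage ℓ s)).analyticOnNhd (hso.preimage hℓ)
  have hzero : f ∘ ℓ =ᶠ[𝓝 0] 0 := (hℓ.tendsto' 0 w (by simp [ℓ])).eventually hfw
  simpa [ℓ] using hfℓ.eqOn_zero_of_preconnected_of_eventuallyEq_zero hS.isPreconnected
    (show ℓ 0 ∈ s by simpa [ℓ]) hzero (show ℓ 1 ∈ s by simpa [ℓ])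

theorem DifferentiableOn.eqOn_zero_of_preconnected_of_eventuallyEq_zero {f : E → F}
    {Ω : Set E} {x₀ : E} (hf : DifferentiableOn ℂ f Ω) (hΩ : IsPreconnected Ω)
    (hΩo : IsOpen Ω) (hx₀ : x₀ ∈ Ω) (hfx₀ : f =ᶠ[𝓝 x₀] 0) : EqOn f 0 Ω := by
  have hsub : Ω ⊆ {x | f =ᶠ[𝓝 x] 0} := by
    refine hΩ.subset_of_closure_inter_subset isOpen_setOfPred_eventually_nhds ⟨x₀, hx₀, hfx₀⟩ ?_
    rintro x ⟨hxU, hxΩ⟩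
    obtain ⟨r, hr, hrΩ⟩ := Metric.isOpen_iff.1 hΩo x hxΩ
    obtain ⟨w, hwU, hxw⟩ := Metric.mem_closure_iff.1 hxU r hr
    have hball := (hf.mono hrΩ).eqOn_zero_of_convex_of_eventuallyEq_zero (convex_ball x r)
      isOpen_ball (mem_ball'.2 hxw) hwU
    exact hball.eventuallyEq_of_mem (ball_mem_nhds x hr)
  exact fun x hx => (hsub hx).self_of_nhds

end IdentityTheorem

/-- **Lemma 4.1** ([AH], Lemma 2). Let `Ω ⊂ ℂⁿ` be a domain containing the origin and let
`A_i = ∑_j a_{ij}(z) ∂/∂z_j`, `i = 1, …, n`, be holomorphic vector fields on `Ω` with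
`a_{ij}(0) = δ_{ij}`. If `f ∈ 𝒪(Ω)` satisfies `A_i f ∈ 𝒪(Ω)·f` for every `i` and
`f(0) = 0`, then `f = 0` identically on `Ω`. -/
theorem vanishing_of_holomorphic_eigenfunction
    {n : ℕ}
    -- `Ω` is a domain in `ℂⁿ` containing the origin
    (Ω : Set (Fin n → ℂ)) (hΩopen : IsOpen Ω) (hΩconn : IsConnected Ω)
    (h0 : (0 : Fin n → ℂ) ∈ Ω)
    -- the coefficients of the holomorphic vector fields `A_i`
    (a : Fin n → Fin n → (Fin n → ℂ) → ℂ)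
    (ha : ∀ i j, DifferentiableOn ℂ (a i j) Ω)
    (ha0 : ∀ i j, a i j 0 = if i = j then (1 : ℂ) else 0)
    -- `f` is holomorphic on `Ω`
    (f : (Fin n → ℂ) → ℂ) (hf : DifferentiableOn ℂ f Ω)
    -- `A_i f ∈ 𝒪(Ω)·f` for every `i`
    (hAf : ∀ i, ∃ g : (Fin n → ℂ) → ℂ, DifferentiableOn ℂ g Ω ∧
      ∀ z ∈ Ω, (∑ j, a i j z * fderiv ℂ f z (Pi.single j 1)) = g z * f z)
    -- `f` vanishes at the origin
    (hf0 : f 0 = 0) :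
    ∀ z ∈ Ω, f z = 0 := by
  choose g hg hAg using hAf
  have hΩ0 : Ω ∈ 𝓝 0 := hΩopen.mem_nhds h0
  obtain ⟨K, hK⟩ := exists_eventually_norm_fderiv_le_mul_norm (f := f) (r := fun i z j => a i j z)
    (fun i => continuousAt_pi.2 fun j => (ha i j).continuousOn.continuousAt hΩ0)
    (fun i => funext fun j => by simp [ha0, Pi.single_apply, eq_comm])
    (fun i => (hg i).continuousOn.continuousAt hΩ0)
    (fun i => eventually_of_mem hΩ0 fun z hz => by
      rw [smul_eq_mul, ← hAg i z hz, (fderiv ℂ f z).apply_eq_sum_smul_apply_single]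
      rfl)
  obtain ⟨ρ, hρ, hball⟩ := Metric.eventually_nhds_iff_ball.1 (Filter.inter_mem hΩ0 hK)
  have hloc : EqOn f 0 (ball 0 ρ) :=
    (hf.mono fun z hz => (hball z hz).1).eqOn_zero_of_starConvex_of_norm_fderiv_le
      ((convex_ball 0 ρ).starConvex (mem_ball_self hρ)) isOpen_ball (fun z hz => (hball z hz).2)
      hf0
  exact hf.eqOn_zero_of_preconnected_of_eventuallyEq_zero hΩconn.isPreconnected hΩopen h0
    (hloc.eventuallyEq_of_mem (ball_mem_nhds 0 hρ))
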